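/- The locality factor η(r,s) = b_rs ν_rs^T B^† ν_rs of an edge (r,s) in a connected weighted graph is bounded below by b_rs / λ_F(r,s), where λ_F(r,s) is the minimum cut capacity (equivalently, by max-flow-min-cut, the maximum feasible flow) between r and s. -/

import Mathlib

open Matrix BigOperators

/-- The weighted Laplacian of a weight function `w` on `Fin N`. -/
def lapMat {N : ℕ} (w : Fin N → Fin N → ℝ) : Matrix (Fin N) (Fin N) ℝ :=
  fun i j => if i = j then ∑ k, w i k else - w i j

/-- Symmetric, nonnegative weights with zero diagonal. -/
def IsWeight {N : ℕ} (w : Fin N → Fin N → ℝ) : Prop :=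
  (∀ i j, w i j = w j i) ∧ (∀ i j, 0 ≤ w i j) ∧ (∀ i, w i i = 0)

/-- The simple graph whose edges are the pairs with nonzero weight. -/
def wGraph {N : ℕ} (w : Fin N → Fin N → ℝ) : SimpleGraph (Fin N) where
  Adj i j := i ≠ j ∧ (w i j ≠ 0 ∨ w j i ≠ 0)
  symm := ⟨fun i j ⟨h1, h2⟩ => ⟨h1.symm, h2.symm⟩⟩
  loopless := ⟨fun i h => h.1 rfl⟩

/-- The dipole vector `ν_rs`: `+1` at `r`, `-1` at `s`, `0` elsewhere. -/
def dipole {N : ℕ} (r s : Fin N) : Fin N → ℝ :=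
  fun i => (if i = r then (1:ℝ) else 0) - (if i = s then (1:ℝ) else 0)

/-- `Bd` is the Moore-Penrose pseudoinverse of `B` (the four Penrose axioms). -/
def IsMoorePenrose {N : ℕ} (B Bd : Matrix (Fin N) (Fin N) ℝ) : Prop :=
  B * Bd * B = B ∧ Bd * B * Bd = Bd ∧ (B * Bd)ᵀ = B * Bd ∧ (Bd * B)ᵀ = Bd * B

/-- The locality factor `η(r,s) = b_rs ν_rs^T B^† ν_rs`. -/
def eta {N : ℕ} (w : Fin N → Fin N → ℝ) (Bdag : Matrix (Fin N) (Fin N) ℝ)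
    (r s : Fin N) : ℝ :=
  w r s * (dipole r s ⬝ᵥ Bdag.mulVec (dipole r s))

/-- The capacity of the cut determined by a vertex set `S`. -/
def cutCap {N : ℕ} (w : Fin N → Fin N → ℝ) (S : Finset (Fin N)) : ℝ :=
  ∑ i ∈ S, ∑ j ∈ Sᶜ, w i j

/-- The minimum cut capacity separating `r` from `s`. -/
noncomputable def lambdaF {N : ℕ} (w : Fin N → Fin N → ℝ) (r s : Fin N) : ℝ :=
  sInf {c : ℝ | ∃ S : Finset (Fin N), r ∈ S ∧ s ∉ S ∧ c = cutCap w S}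

/-!
Put `φ = B^† ν_rs`. On a connected graph `ker B` consists of the constant vectors, so `ν_rs` lies in
`(ker B)ᗮ = range B` and the Penrose identity `B B^† B = B` gives `B φ = ν_rs`: `φ` is the potential
of a unit current from `r` to `s`, and `η(r,s) = b_rs (φ_r - φ_s)`. For a cut `S` separating `r`
from `s`, the current leaving `S` is `1 = ∑_{i ∈ S, j ∉ S} b_ij (φ_i - φ_j)`. By Cauchy–Schwarz its
square is at most `cut(S) · ∑_{i ∈ S, j ∉ S} b_ij (φ_i - φ_j)²`, and the last sum is part of the
energy `φᵀ B φ = φ_r - φ_s`. Hence `cut(S) ≥ 1 / (φ_r - φ_s)` for every such `S`.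
-/

open Finset

lemma Matrix.IsHermitian.exists_mulVec_eq {n : Type*} [Fintype n] [DecidableEq n]
    {A : Matrix n n ℝ} (hA : A.IsHermitian) {v : n → ℝ}
    (hv : ∀ x, A *ᵥ x = 0 → v ⬝ᵥ x = 0) : ∃ u, A *ᵥ u = v := by
  set T := toEuclideanLin A
  have hrange : LinearMap.range T = (LinearMap.ker T)ᗮ := by
    rw [← (isSymmetric_toEuclideanLin_iff.2 hA).orthogonal_range, Submodule.orthogonal_orthogonal]
  have hmem : WithLp.toLp 2 v ∈ LinearMap.range T := by
    rw [hrange, Submodule.mem_orthogonal']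
    intro x hx
    rw [EuclideanSpace.inner_eq_star_dotProduct]
    simpa [T, dotProduct_comm] using hv x (by simpa [T] using congrArg WithLp.ofLp hx)
  obtain ⟨u, hu⟩ := hmem
  exact ⟨u, by simpa [T] using congrArg WithLp.ofLp hu⟩

section Laplacian

variable {N : ℕ} {w : Fin N → Fin N → ℝ}

lemma lapMat_mulVec_apply (hdiag : ∀ i, w i i = 0) (x : Fin N → ℝ) (i : Fin N) :
    (lapMat w *ᵥ x) i = ∑ j, w i j * (x i - x j) := by
  have hterm : ∀ j,
      lapMat w i j * x j = (if i = j then (∑ k, w i k) * x j else 0) - w i j * x j := by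
    intro j
    rcases eq_or_ne i j with rfl | h
    · simp [lapMat, hdiag i]
    · simp [lapMat, h]
  simp only [mulVec, dotProduct, hterm, sum_sub_distrib, sum_ite_eq, mem_univ, if_true, mul_sub,
    sum_mul]

lemma lapMat_isHermitian (hsymm : ∀ i j, w i j = w j i) : (lapMat w).IsHermitian := by
  ext i j
  simp only [conjTranspose_apply, star_trivial, lapMat, eq_comm (a := j), hsymm j i]
  split_ifs with h
  · subst h; rfl
  · rfl

lemma two_mul_dotProduct_lapMat_mulVec (hsymm : ∀ i j, w i j = w j i) (hdiag : ∀ i, w i i = 0)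
    (x : Fin N → ℝ) : 2 * (x ⬝ᵥ lapMat w *ᵥ x) = ∑ i, ∑ j, w i j * (x i - x j) ^ 2 := by
  have hswap : ∑ i, ∑ j, w i j * (x i * (x i - x j)) = ∑ i, ∑ j, w i j * (x j * (x j - x i)) := by
    rw [sum_comm]
    simp_rw [hsymm]
  have hquad : x ⬝ᵥ lapMat w *ᵥ x = ∑ i, ∑ j, w i j * (x i * (x i - x j)) := by
    simp only [dotProduct, lapMat_mulVec_apply hdiag, mul_sum]
    simp_rw [mul_left_comm]
  rw [two_mul, hquad]
  nth_rewrite 2 [hswap]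
  simp_rw [← sum_add_distrib]
  congr! 2
  ring

lemma sum_lapMat_mulVec_eq_sum_cut (hsymm : ∀ i j, w i j = w j i) (hdiag : ∀ i, w i i = 0)
    (x : Fin N → ℝ) (S : Finset (Fin N)) :
    ∑ i ∈ S, (lapMat w *ᵥ x) i = ∑ i ∈ S, ∑ j ∈ Sᶜ, w i j * (x i - x j) := by
  have hinner : ∑ i ∈ S, ∑ j ∈ S, w i j * (x i - x j) = 0 := by
    have hanti : ∑ i ∈ S, ∑ j ∈ S, w i j * (x i - x j)
        = -∑ i ∈ S, ∑ j ∈ S, w i j * (x i - x j) := by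
      conv_lhs => rw [sum_comm]
      simp only [← sum_neg_distrib]
      refine sum_congr rfl fun i _ => sum_congr rfl fun j _ => ?_
      rw [hsymm]
      ring
    linarith
  simp only [lapMat_mulVec_apply hdiag, ← sum_add_sum_compl S, sum_add_distrib, hinner, zero_add]

lemma sum_cut_sq_le_dotProduct_lapMat_mulVec (hw : IsWeight w) (x : Fin N → ℝ)
    (S : Finset (Fin N)) :
    ∑ i ∈ S, ∑ j ∈ Sᶜ, w i j * (x i - x j) ^ 2 ≤ x ⬝ᵥ lapMat w *ᵥ x := by
  obtain ⟨hsymm, hnonneg, hdiag⟩ := hw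
  set e : Fin N → Fin N → ℝ := fun i j => w i j * (x i - x j) ^ 2
  have he : ∀ i j, 0 ≤ e i j := fun i j => mul_nonneg (hnonneg i j) (sq_nonneg _)
  have hswap : ∑ i ∈ Sᶜ, ∑ j ∈ S, e i j = ∑ i ∈ S, ∑ j ∈ Sᶜ, e i j := by
    rw [sum_comm]
    refine sum_congr rfl fun i _ => sum_congr rfl fun j _ => ?_
    simp only [e, hsymm i j]
    ring
  have hdrop : ∀ T : Finset (Fin N), ∑ i ∈ T, ∑ j ∈ Tᶜ, e i j ≤ ∑ i ∈ T, ∑ j, e i j :=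
    fun T => sum_le_sum fun i _ => sum_le_sum_of_subset_of_nonneg (subset_univ _)
      fun j _ _ => he i j
  have htotal := two_mul_dotProduct_lapMat_mulVec hsymm hdiag x
  rw [← sum_add_sum_compl S] at htotal
  have hdropCompl := hdrop Sᶜ
  rw [compl_compl, hswap] at hdropCompl
  linarith [hdrop S]

lemma eq_of_lapMat_mulVec_eq_zero (hw : IsWeight w) (hconn : (wGraph w).Connected)
    {x : Fin N → ℝ} (hx : lapMat w *ᵥ x = 0) (i j : Fin N) : x i = x j := by
  obtain ⟨hsymm, hnonneg, hdiag⟩ := hw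
  have henergy : ∑ i, ∑ j, w i j * (x i - x j) ^ 2 = 0 := by
    rw [← two_mul_dotProduct_lapMat_mulVec hsymm hdiag, hx, dotProduct_zero, mul_zero]
  have hedge : ∀ i j, w i j ≠ 0 → x i = x j := by
    intro i j hij
    rw [sum_eq_zero_iff_of_nonneg fun i _ => sum_nonneg fun j _ =>
      mul_nonneg (hnonneg i j) (sq_nonneg _)] at henergy
    have := (sum_eq_zero_iff_of_nonneg fun j _ => mul_nonneg (hnonneg i j) (sq_nonneg _)).1
      (henergy i (mem_univ i)) j (mem_univ j)
    simpa [hij, sub_eq_zero] using this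
  have hadj : ∀ i j, (wGraph w).Adj i j → x i = x j := by
    rintro i j ⟨-, hij | hji⟩
    · exact hedge i j hij
    · exact (hedge j i hji).symm
  obtain ⟨p⟩ := hconn.preconnected i j
  induction p with
  | nil => rfl
  | cons h _ ih => exact (hadj _ _ h).trans ih

lemma dipole_dotProduct (r s : Fin N) (x : Fin N → ℝ) : dipole r s ⬝ᵥ x = x r - x s := by
  simp [dipole, dotProduct, sub_mul, sum_sub_distrib]

lemma sum_dipole_of_mem_of_notMem {r s : Fin N} {S : Finset (Fin N)} (hr : r ∈ S)
    (hs : s ∉ S) : ∑ i ∈ S, dipole r s i = 1 := by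
  simp [dipole, sum_sub_distrib, hr, hs]

lemma exists_lapMat_mulVec_eq_dipole (hw : IsWeight w) (hconn : (wGraph w).Connected)
    (r s : Fin N) : ∃ u, lapMat w *ᵥ u = dipole r s :=
  (lapMat_isHermitian hw.1).exists_mulVec_eq fun x hx => by
    rw [dipole_dotProduct, eq_of_lapMat_mulVec_eq_zero hw hconn hx r s, sub_self]

lemma IsMoorePenrose.mulVec_mulVec_of_eq {B Bd : Matrix (Fin N) (Fin N) ℝ}
    (h : IsMoorePenrose B Bd) {u v : Fin N → ℝ} (hu : B *ᵥ u = v) : B *ᵥ (Bd *ᵥ v) = v := by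
  rw [← hu, mulVec_mulVec, mulVec_mulVec, h.1]

lemma cutCap_nonneg (hnonneg : ∀ i j, 0 ≤ w i j) (S : Finset (Fin N)) : 0 ≤ cutCap w S :=
  sum_nonneg fun i _ => sum_nonneg fun j _ => hnonneg i j

lemma one_le_cutCap_mul_sub (hw : IsWeight w) {r s : Fin N} {φ : Fin N → ℝ}
    (hφ : lapMat w *ᵥ φ = dipole r s) {S : Finset (Fin N)} (hr : r ∈ S) (hs : s ∉ S) :
    1 ≤ cutCap w S * (φ r - φ s) := by
  have hflow : ∑ i ∈ S, ∑ j ∈ Sᶜ, w i j * (φ i - φ j) = 1 := by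
    rw [← sum_lapMat_mulVec_eq_sum_cut hw.1 hw.2.2, hφ, sum_dipole_of_mem_of_notMem hr hs]
  have hcs : (∑ i ∈ S, ∑ j ∈ Sᶜ, w i j * (φ i - φ j)) ^ 2
      ≤ cutCap w S * ∑ i ∈ S, ∑ j ∈ Sᶜ, w i j * (φ i - φ j) ^ 2 := by
    simp only [cutCap, ← sum_product']
    refine sum_sq_le_sum_mul_sum_of_sq_le_mul _ (fun p _ => hw.2.1 _ _)
      (fun p _ => mul_nonneg (hw.2.1 _ _) (sq_nonneg _)) fun p _ => le_of_eq (by ring)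
  have henergy := sum_cut_sq_le_dotProduct_lapMat_mulVec hw φ S
  rw [hφ, dotProduct_comm, dipole_dotProduct] at henergy
  calc (1 : ℝ) = (∑ i ∈ S, ∑ j ∈ Sᶜ, w i j * (φ i - φ j)) ^ 2 := by rw [hflow, one_pow]
    _ ≤ _ := hcs
    _ ≤ cutCap w S * (φ r - φ s) := mul_le_mul_of_nonneg_left henergy (cutCap_nonneg hw.2.1 S)

lemma le_lambdaF {r s : Fin N} (hrs : r ≠ s) {c : ℝ}
    (h : ∀ S : Finset (Fin N), r ∈ S → s ∉ S → c ≤ cutCap w S) :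
    c ≤ lambdaF w r s :=
  le_csInf ⟨_, {r}, mem_singleton_self r, by simpa using hrs.symm, rfl⟩ <| by
    rintro _ ⟨S, hr, hs, rfl⟩
    exact h S hr hs

end Laplacian

theorem locality_factor_min_cut_bound {N : ℕ} (w : Fin N → Fin N → ℝ)
    (hw : IsWeight w) (hconn : (wGraph w).Connected)
    (r s : Fin N) (hedge : 0 < w r s)
    (Bdag : Matrix (Fin N) (Fin N) ℝ)
    (hB : IsMoorePenrose (lapMat w) Bdag) :
    w r s / lambdaF w r s ≤ eta w Bdag r s := by
  have hrs : r ≠ s := by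
    rintro rfl
    exact hedge.ne' (hw.2.2 r)
  set φ := Bdag *ᵥ dipole r s
  obtain ⟨u, hu⟩ := exists_lapMat_mulVec_eq_dipole hw hconn r s
  have hφ : lapMat w *ᵥ φ = dipole r s := hB.mulVec_mulVec_of_eq hu
  have hcut : ∀ S : Finset (Fin N), r ∈ S → s ∉ S → 1 ≤ cutCap w S * (φ r - φ s) :=
    fun S hr hs => one_le_cutCap_mul_sub hw hφ hr hs
  have hpos : 0 < φ r - φ s := by
    have hsingleton := hcut {r} (mem_singleton_self r) (by simpa using hrs.symm)
    exact pos_of_mul_pos_right (one_pos.trans_le hsingleton) (cutCap_nonneg hw.2.1 _)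
  have hlam : (φ r - φ s)⁻¹ ≤ lambdaF w r s :=
    le_lambdaF hrs fun S hr hs => (inv_le_iff_one_le_mul₀ hpos).2 (hcut S hr hs)
  calc w r s / lambdaF w r s ≤ w r s / (φ r - φ s)⁻¹ :=
        div_le_div_of_nonneg_left (hw.2.1 r s) (inv_pos.2 hpos) hlam
    _ = eta w Bdag r s := by rw [eta, dipole_dotProduct, div_inv_eq_mul]
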